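/- For every integer s ≥ 5, the ratio degIII(s)/n_s is strictly increasing in s: degIII(s) / (s(s+1)/2) < degIII(s+1) / ((s+1)(s+2)/2), where degIII(s) := ( (s(s+1)/2)! · ∏_{j=1}^{s-1} (2j)! ) / ∏_{j=s}^{2s-1} j! and n_s = s(s+1)/2. -/
import Mathlib


open Nat Finset


lemma fact_add (a m : ℕ) : (a + m)! = a ! * ∏ i ∈ range m, (a + 1 + i) := by
  induction m with
  | zero => simp
  | succ m ih =>
    rw [← add_assoc, factorial_succ, ih, prod_range_succ]
    have : a + 1 + m = a + m + 1 := by ring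
    rw [this]; ring

lemma core_ineq (u : ℕ) (n : ℕ) (h2 : 2 * n = (u+5) * (u+6)) :
    (n + (u+6)) * (∏ i ∈ range (u+6), (u+6+i)) < (∏ i ∈ range (u+6), (n+1+i)) * n := by
  have hn : 2*(u+6) ≤ n + 1 := by nlinarith
  have hun : u + 5 ≤ n := by nlinarith
  have hR : 0 < ∏ i ∈ range (u+6), (u+6+i) := by positivity
  have hQR : 2 * ∏ i ∈ range (u+6), (u+6+i) ≤ ∏ i ∈ range (u+6), (n+1+i) := by
    rw [prod_range_succ' (fun i => u+6+i), prod_range_succ' (fun i => n+1+i)]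
    calc 2 * ((∏ i ∈ range (u+5), (u+6+(i+1))) * (u+6))
        = (∏ i ∈ range (u+5), (u+6+(i+1))) * (2*(u+6)) := by ring
      _ ≤ (∏ i ∈ range (u+5), (n+1+(i+1))) * (n+1+0) := by
          apply Nat.mul_le_mul
          · apply Finset.prod_le_prod'
            intro i _
            omega
          · omega
  calc (n + (u+6)) * (∏ i ∈ range (u+6), (u+6+i))
      < (2*n) * (∏ i ∈ range (u+6), (u+6+i)) := by
        apply Nat.mul_lt_mul_of_lt_of_le (by nlinarith) le_rfl hR
    _ = n * (2 * ∏ i ∈ range (u+6), (u+6+i)) := by ring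
    _ ≤ n * (∏ i ∈ range (u+6), (n+1+i)) := Nat.mul_le_mul_left n hQR
    _ = (∏ i ∈ range (u+6), (n+1+i)) * n := by ring

lemma key (s : ℕ) (hs : 5 ≤ s) :
    ((s*(s+1)/2)! * ∏ j ∈ Icc 1 (s-1), (2*j)!) *
      ((∏ j ∈ Icc (s+1) (2*(s+1)-1), j !) * ((s+1)*(s+1+1)/2))
    < (((s+1)*(s+1+1)/2)! * ∏ j ∈ Icc 1 (s+1-1), (2*j)!) *
      ((∏ j ∈ Icc s (2*s-1), j !) * (s*(s+1)/2)) := by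
  obtain ⟨u, rfl⟩ : ∃ u, s = u + 5 := ⟨s-5, by omega⟩
  have hb1 : u + 5 - 1 = u + 4 := by omega
  have hb2 : u + 5 + 1 - 1 = u + 5 := by omega
  have hb3 : 2*(u+5+1) - 1 = 2*u+11 := by omega
  have hb4 : 2*(u+5) - 1 = 2*u+9 := by omega
  have hb5 : u + 5 + 1 = u + 6 := by omega
  rw [hb1, hb2, hb3, hb4, hb5]
  set n := (u+5)*(u+6)/2 with hndef
  set nb := (u+6)*(u+6+1)/2 with hnbdef
  have h2 : 2 * n = (u+5) * (u+6) := by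
    rw [hndef, Nat.mul_div_cancel' ]
    exact (even_mul_succ_self (u+5)).two_dvd
  have h2b : 2 * nb = (u+6) * (u+7) := by
    rw [hnbdef, Nat.mul_div_cancel' (even_mul_succ_self (u+6)).two_dvd]
  have hnb : nb = n + (u+6) := by
    have h4 : 2 * (n + (u+6)) = (u+6) * (u+7) := by rw [Nat.mul_add, h2]; ring
    have h3 : 2 * nb = 2 * (n + (u+6)) := h2b.trans h4.symm
    exact Nat.eq_of_mul_eq_mul_left (by norm_num) h3
  set Q := ∏ i ∈ range (u+6), (n+1+i) with hQdef
  set R := ∏ i ∈ range (u+6), (u+6+i) with hRdef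
  have hnbfact : nb ! = n ! * Q := by rw [hnb, fact_add]
  have hP : ∏ j ∈ Icc 1 (u+5), (2*j)! = (∏ j ∈ Icc 1 (u+4), (2*j)!) * (2*(u+5))! := by
    rw [show u+5 = u+4+1 from rfl, Finset.prod_Icc_succ_top (by omega)]
  have hBB : (u+5)! * ∏ j ∈ Icc (u+6) (2*u+11), j !
      = (∏ j ∈ Icc (u+5) (2*u+9), j !) * ((2*u+10)! * (2*u+11)!) := by
    have t1 : ∏ j ∈ Icc (u+5) (2*u+11), j ! = (u+5)! * ∏ j ∈ Icc (u+6) (2*u+11), j ! := by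
      rw [← Finset.Ico_add_one_right_eq_Icc, Finset.prod_eq_prod_Ico_succ_bot (by omega), Finset.Ico_add_one_right_eq_Icc]
    have t2 : ∏ j ∈ Icc (u+5) (2*u+11), j !
        = (∏ j ∈ Icc (u+5) (2*u+9), j !) * ((2*u+10)! * (2*u+11)!) := by
      rw [show 2*u+11 = (2*u+10)+1 from rfl, Finset.prod_Icc_succ_top (by omega),
        show 2*u+10 = (2*u+9)+1 from rfl, Finset.prod_Icc_succ_top (by omega)]
      ring
    rw [← t1, t2]
  have hfact : (2*u+11)! = (u+5)! * R := by
    rw [show 2*u+11 = (u+5)+(u+6) by omega, fact_add]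
  have core := core_ineq u n h2
  apply Nat.lt_of_mul_lt_mul_left (a := (u+5)!)
  have e1 : (u+5)! * (((n)! * ∏ j ∈ Icc 1 (u+4), (2*j)!) *
      ((∏ j ∈ Icc (u+6) (2*u+11), j !) * nb))
      = ((n)! * (∏ j ∈ Icc 1 (u+4), (2*j)!) * (∏ j ∈ Icc (u+5) (2*u+9), j !) * (2*u+10)! * (u+5)!)
        * (nb * R) := by
    calc (u+5)! * (((n)! * ∏ j ∈ Icc 1 (u+4), (2*j)!) *
      ((∏ j ∈ Icc (u+6) (2*u+11), j !) * nb))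
        = ((n)! * (∏ j ∈ Icc 1 (u+4), (2*j)!) * nb) * ((u+5)! * ∏ j ∈ Icc (u+6) (2*u+11), j !) := by
          ring
      _ = ((n)! * (∏ j ∈ Icc 1 (u+4), (2*j)!) * nb) *
          ((∏ j ∈ Icc (u+5) (2*u+9), j !) * ((2*u+10)! * ((u+5)! * R))) := by rw [hBB, hfact]
      _ = _ := by ring
  have e2 : (u+5)! * ((nb ! * ∏ j ∈ Icc 1 (u+5), (2*j)!) *
      ((∏ j ∈ Icc (u+5) (2*u+9), j !) * n))
      = ((n)! * (∏ j ∈ Icc 1 (u+4), (2*j)!) * (∏ j ∈ Icc (u+5) (2*u+9), j !) * (2*u+10)! * (u+5)!)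
        * (Q * n) := by
    rw [hnbfact, hP]
    have : 2*(u+5) = 2*u+10 := by ring
    rw [this]; ring
  rw [e1, e2, hnb]
  exact mul_lt_mul_of_pos_left core (by positivity)

/-- The degree of the coherent states embedding of `III_s = Sp(s)/U(s)`,
as a rational number. -/
def degIII (s : ℕ) : ℚ :=
  ((s * (s + 1) / 2)! * ∏ j ∈ Finset.Icc 1 (s - 1), (2 * j)! : ℚ) /
    (∏ j ∈ Finset.Icc s (2 * s - 1), j ! : ℚ)

theorem stmt_7 (s : ℕ) (hs : 5 ≤ s) :
    degIII s / ((s * (s + 1) : ℚ) / 2) < degIII (s + 1) / (((s + 1) * (s + 2) : ℚ) / 2) := by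
  have cast1 : ((s * (s + 1) : ℚ)) / 2 = ((s * (s+1) / 2 : ℕ) : ℚ) := by
    have h : (s * (s+1) / 2 : ℕ) * 2 = s * (s+1) := Nat.div_mul_cancel (even_mul_succ_self s).two_dvd
    rw [eq_comm, eq_div_iff (by norm_num : (2:ℚ) ≠ 0)]
    exact_mod_cast congrArg (Nat.cast : ℕ → ℚ) h
  have cast2 : (((s+1) * (s + 2) : ℚ)) / 2 = (((s+1) * (s+1+1) / 2 : ℕ) : ℚ) := by
    have h : ((s+1) * (s+1+1) / 2 : ℕ) * 2 = (s+1) * (s+1+1) :=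
      Nat.div_mul_cancel (even_mul_succ_self (s+1)).two_dvd
    rw [eq_comm, eq_div_iff (by norm_num : (2:ℚ) ≠ 0)]
    have := congrArg (Nat.cast : ℕ → ℚ) h
    push_cast at this ⊢
    linarith
  have hdeg : ∀ t : ℕ, degIII t = (((t * (t + 1) / 2)! * ∏ j ∈ Finset.Icc 1 (t - 1), (2 * j)! : ℕ) : ℚ) /
      ((∏ j ∈ Finset.Icc t (2 * t - 1), j ! : ℕ) : ℚ) := by
    intro t; unfold degIII; push_cast; ring
  have hB1 : 0 < (∏ j ∈ Finset.Icc s (2*s-1), j ! : ℕ) :=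
    Finset.prod_pos (fun i _ => Nat.factorial_pos i)
  have hB2 : 0 < (∏ j ∈ Finset.Icc (s+1) (2*(s+1)-1), j ! : ℕ) :=
    Finset.prod_pos (fun i _ => Nat.factorial_pos i)
  have hn1 : 0 < s * (s+1) / 2 := Nat.div_pos (by nlinarith) (by norm_num)
  have hn2 : 0 < (s+1) * (s+1+1) / 2 := Nat.div_pos (by nlinarith) (by norm_num)
  rw [cast1, cast2, hdeg, hdeg, div_div, div_div, div_lt_div_iff₀]
  · exact_mod_cast key s hs
  · exact mul_pos (by exact_mod_cast hB1) (by exact_mod_cast hn1)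
  · exact mul_pos (by exact_mod_cast hB2) (by exact_mod_cast hn2)
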